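/- Let P be stochastic, Π ∈ ℝ^{m×m} arbitrary with ‖Π‖_∞ ≠ 1, and A, π₀, p₀ arbitrary. Then ‖π₀ᵀΠ^k A − p₀ᵀP^k‖₁ ≤ ‖π₀ᵀA − p₀ᵀ‖₁ + ‖π₀‖₁·‖ΠA − AP‖_∞·(‖Π‖_∞^k − 1)/(‖Π‖_∞ − 1). -/

import Mathlib

/-! Writing `D = ΠA − AP`, one has `π₀ᵀΠ^{k+1}A − p₀ᵀP^{k+1} = π₀ᵀΠ^k D + (π₀ᵀΠ^k A − p₀ᵀP^k) P`.
Right multiplication by a stochastic `P` does not increase the ℓ1 norm of a row vector, while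
`‖π₀ᵀΠ^k D‖₁ ≤ ‖π₀‖₁ ‖Π‖_∞^k ‖D‖_∞`; by induction the error grows by at most the terms of a
geometric series, whose sum is the stated quotient as long as `‖Π‖_∞ ≠ 1`. -/

open Matrix BigOperators

noncomputable def l1 {n : ℕ} (v : Fin n → ℝ) : ℝ := ∑ i, |v i|

noncomputable def ninf {m n : ℕ} (A : Matrix (Fin m) (Fin n) ℝ) : ℝ :=
  ⨆ i, ∑ j, |A i j|

def IsStochastic {m n : ℕ} (A : Matrix (Fin m) (Fin n) ℝ) : Prop :=
  (∀ i j, 0 ≤ A i j) ∧ ∀ i, ∑ j, A i j = 1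

def IsGenerator {n : ℕ} (Q : Matrix (Fin n) (Fin n) ℝ) : Prop :=
  (∀ i j, i ≠ j → 0 ≤ Q i j) ∧ ∀ i, ∑ j, Q i j = 0

section Norms

variable {m n p : ℕ}

lemma l1_nonneg (v : Fin n → ℝ) : 0 ≤ l1 v :=
  Finset.sum_nonneg fun _ _ => abs_nonneg _

lemma l1_add_le (u v : Fin n → ℝ) : l1 (u + v) ≤ l1 u + l1 v := by
  unfold l1
  rw [← Finset.sum_add_distrib]
  exact Finset.sum_le_sum fun i _ => abs_add_le _ _

lemma l1_smul (c : ℝ) (v : Fin n → ℝ) : l1 (c • v) = |c| * l1 v := by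
  simp only [l1, Pi.smul_apply, smul_eq_mul, abs_mul, Finset.mul_sum]

lemma l1_sum_le {ι : Type*} (s : Finset ι) (v : ι → Fin n → ℝ) :
    l1 (∑ i ∈ s, v i) ≤ ∑ i ∈ s, l1 (v i) :=
  Finset.le_sum_of_subadditive l1 (by simp [l1]) l1_add_le s v

lemma l1_row_le_ninf (A : Matrix (Fin m) (Fin n) ℝ) (i : Fin m) : l1 (A i) ≤ ninf A :=
  le_ciSup (f := fun i => ∑ j, |A i j|) (Set.finite_range _).bddAbove i

lemma ninf_le {A : Matrix (Fin m) (Fin n) ℝ} {c : ℝ} (hc : 0 ≤ c) (h : ∀ i, l1 (A i) ≤ c) :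
    ninf A ≤ c :=
  Real.iSup_le h hc

lemma ninf_nonneg (A : Matrix (Fin m) (Fin n) ℝ) : 0 ≤ ninf A :=
  Real.iSup_nonneg fun i => l1_nonneg (A i)

lemma l1_vecMul_le (v : Fin m → ℝ) (A : Matrix (Fin m) (Fin n) ℝ) :
    l1 (v ᵥ* A) ≤ l1 v * ninf A :=
  calc l1 (v ᵥ* A) = l1 (∑ i, v i • A i) := by rw [vecMul_eq_sum]
    _ ≤ ∑ i, l1 (v i • A i) := l1_sum_le _ _
    _ = ∑ i, |v i| * l1 (A i) := by simp only [l1_smul]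
    _ ≤ ∑ i, |v i| * ninf A := by gcongr with i; exact l1_row_le_ninf A i
    _ = l1 v * ninf A := Finset.sum_mul _ _ _ |>.symm

lemma ninf_mul_le (A : Matrix (Fin m) (Fin n) ℝ) (B : Matrix (Fin n) (Fin p) ℝ) :
    ninf (A * B) ≤ ninf A * ninf B :=
  ninf_le (mul_nonneg (ninf_nonneg A) (ninf_nonneg B)) fun i =>
    calc l1 ((A * B) i) = l1 (A i ᵥ* B) := rfl
      _ ≤ l1 (A i) * ninf B := l1_vecMul_le _ _
      _ ≤ ninf A * ninf B := mul_le_mul_of_nonneg_right (l1_row_le_ninf A i) (ninf_nonneg B)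

lemma ninf_one_le : ninf (1 : Matrix (Fin n) (Fin n) ℝ) ≤ 1 :=
  ninf_le zero_le_one fun i => by simp [l1, one_apply, apply_ite abs]

lemma ninf_pow_le (A : Matrix (Fin m) (Fin m) ℝ) (k : ℕ) : ninf (A ^ k) ≤ ninf A ^ k := by
  induction k with
  | zero => simpa using ninf_one_le
  | succ k ih =>
    rw [pow_succ, pow_succ]
    exact (ninf_mul_le _ _).trans (mul_le_mul_of_nonneg_right ih (ninf_nonneg A))

lemma IsStochastic.ninf_le_one {P : Matrix (Fin m) (Fin n) ℝ} (hP : IsStochastic P) :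
    ninf P ≤ 1 :=
  ninf_le zero_le_one fun i => by
    simp only [l1, abs_of_nonneg (hP.1 i _), hP.2 i, le_refl]

lemma IsStochastic.l1_vecMul_le {P : Matrix (Fin m) (Fin n) ℝ} (hP : IsStochastic P)
    (v : Fin m → ℝ) : l1 (v ᵥ* P) ≤ l1 v :=
  (_root_.l1_vecMul_le v P).trans (mul_le_of_le_one_right (l1_nonneg v) hP.ninf_le_one)

end Norms

lemma vecMul_pow_succ_mul_sub {R ι κ : Type*} [CommRing R] [Fintype ι] [DecidableEq ι]
    [Fintype κ] [DecidableEq κ] (P : Matrix κ κ R) (Pm : Matrix ι ι R) (A : Matrix ι κ R)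
    (π₀ : ι → R) (p₀ : κ → R) (k : ℕ) :
    π₀ ᵥ* (Pm ^ (k + 1) * A) - p₀ ᵥ* P ^ (k + 1) =
      π₀ ᵥ* (Pm ^ k * (Pm * A - A * P)) + (π₀ ᵥ* (Pm ^ k * A) - p₀ ᵥ* P ^ k) ᵥ* P := by
  rw [Matrix.mul_sub, sub_vecMul, vecMul_vecMul, vecMul_vecMul, ← Matrix.mul_assoc,
    ← Matrix.mul_assoc, ← pow_succ, pow_succ P, vecMul_sub]
  abel

lemma l1_vecMul_pow_mul_sub_le {m n : ℕ} {P : Matrix (Fin n) (Fin n) ℝ} (hP : IsStochastic P)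
    (Pm : Matrix (Fin m) (Fin m) ℝ) (A : Matrix (Fin m) (Fin n) ℝ)
    (π₀ : Fin m → ℝ) (p₀ : Fin n → ℝ) (k : ℕ) :
    l1 (π₀ ᵥ* (Pm ^ k * A) - p₀ ᵥ* P ^ k) ≤
      l1 (π₀ ᵥ* A - p₀) + l1 π₀ * ninf (Pm * A - A * P) * ∑ i ∈ Finset.range k, ninf Pm ^ i := by
  induction k with
  | zero => simp
  | succ k ih =>
    set D := Pm * A - A * P
    have hdefect : l1 (π₀ ᵥ* (Pm ^ k * D)) ≤ l1 π₀ * ninf D * ninf Pm ^ k :=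
      calc l1 (π₀ ᵥ* (Pm ^ k * D)) ≤ l1 π₀ * (ninf Pm ^ k * ninf D) :=
            (l1_vecMul_le _ _).trans <| mul_le_mul_of_nonneg_left
              ((ninf_mul_le _ _).trans (mul_le_mul_of_nonneg_right (ninf_pow_le _ _)
                (ninf_nonneg D))) (l1_nonneg _)
        _ = l1 π₀ * ninf D * ninf Pm ^ k := by ring
    rw [vecMul_pow_succ_mul_sub, Finset.sum_range_succ, mul_add]
    linarith [l1_add_le (π₀ ᵥ* (Pm ^ k * D)) ((π₀ ᵥ* (Pm ^ k * A) - p₀ ᵥ* P ^ k) ᵥ* P),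
      hP.l1_vecMul_le (π₀ ᵥ* (Pm ^ k * A) - p₀ ᵥ* P ^ k)]

theorem stmt_5 {m n : ℕ} (P : Matrix (Fin n) (Fin n) ℝ) (hP : IsStochastic P)
    (Pm : Matrix (Fin m) (Fin m) ℝ) (hPm : ninf Pm ≠ 1)
    (A : Matrix (Fin m) (Fin n) ℝ)
    (π₀ : Fin m → ℝ) (p₀ : Fin n → ℝ) (k : ℕ) :
    l1 (Matrix.vecMul π₀ (Pm ^ k * A) - Matrix.vecMul p₀ (P ^ k)) ≤
      l1 (Matrix.vecMul π₀ A - p₀) +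
        l1 π₀ * ninf (Pm * A - A * P) * ((ninf Pm ^ k - 1) / (ninf Pm - 1)) := by
  rw [← geom_sum_eq hPm k]
  exact l1_vecMul_pow_mul_sub_le hP Pm A π₀ p₀ k
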